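/- Let H be a Hopf algebra over a field k with bijective antipode, all of whose irreducible modules are finite-dimensional. Then a finite-dimensional H-module is tensor-reducible if and only if it is a direct sum of tensor-reducible irreducible H-modules. -/

import Mathlib

open TensorProduct

universe u

section TensorRep

variable (k H V W : Type u) [CommSemiring k] [Semiring H] [Bialgebra k H]
  [AddCommMonoid V] [Module k V] [Module H V] [IsScalarTower k H V] [SMulCommClass H k V]
  [AddCommMonoid W] [Module k W] [Module H W] [IsScalarTower k H W] [SMulCommClass H k W]

/-- The representation of the bialgebra `H` on the tensor product of two `H`-modules,
given by the comultiplication of `H`. -/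
noncomputable def tensorRep : H →ₐ[k] Module.End k (V ⊗[k] W) :=
  ((Module.endTensorEndAlgHom (R := k) (S := k) (A := k) (M := V) (N := W)).comp
    (Algebra.TensorProduct.map (Algebra.lsmul k k V) (Algebra.lsmul k k W))).comp
    (Bialgebra.comulAlgHom k H)

/-- The tensor product `V ⊗[k] W` of two `H`-modules, regarded as an `H`-module via the
comultiplication of `H` (a type synonym of `V ⊗[k] W`). -/
def ModuleTensor (_ : Type u) : Type u := V ⊗[k] W

variable {H}

noncomputable instance : AddCommMonoid (ModuleTensor k V W H) :=
  inferInstanceAs (AddCommMonoid (V ⊗[k] W))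

noncomputable instance : Module k (ModuleTensor k V W H) :=
  inferInstanceAs (Module k (V ⊗[k] W))

noncomputable instance instAddCommGroupModuleTensor
    {k V W : Type u} [CommSemiring k] [AddCommGroup V] [Module k V]
    [AddCommGroup W] [Module k W] (H : Type u) :
    AddCommGroup (ModuleTensor k V W H) :=
  inferInstanceAs (AddCommGroup (V ⊗[k] W))

variable (H)

/-- The `H`-module structure on `V ⊗[k] W` via the comultiplication of `H`. -/
noncomputable instance : Module H (ModuleTensor k V W H) :=
  Module.compHom (V ⊗[k] W) (tensorRep k H V W).toRingHom

instance : IsScalarTower k H (ModuleTensor k V W H) :=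
  ⟨fun c h x => by
    show (tensorRep k H V W (c • h)) x = c • ((tensorRep k H V W h) x)
    rw [map_smul]
    rfl⟩

instance : SMulCommClass H k (ModuleTensor k V W H) :=
  ⟨fun h c x => by
    show (tensorRep k H V W h) (c • x) = c • ((tensorRep k H V W h) x)
    exact (tensorRep k H V W h).map_smul c x⟩

end TensorRep

section Reducible

variable (k H : Type u) [Field k] [Ring H] [HopfAlgebra k H]

/-- An `H`-module `V` is left tensor-reducible if `V ⊗ W` is a semisimple `H`-module
for every irreducible finite-dimensional `H`-module `W`. -/
def LeftTensorReducible (V : Type u) [AddCommGroup V] [Module k V] [Module H V]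
    [IsScalarTower k H V] [SMulCommClass H k V] : Prop :=
  ∀ (W : Type u) [AddCommGroup W] [Module k W] [Module H W] [IsScalarTower k H W]
    [SMulCommClass H k W] [FiniteDimensional k W], IsSimpleModule H W →
      IsSemisimpleModule H (ModuleTensor k V W H)

/-- An `H`-module `V` is right tensor-reducible if `W ⊗ V` is a semisimple `H`-module
for every irreducible finite-dimensional `H`-module `W`. -/
def RightTensorReducible (V : Type u) [AddCommGroup V] [Module k V] [Module H V]
    [IsScalarTower k H V] [SMulCommClass H k V] : Prop :=
  ∀ (W : Type u) [AddCommGroup W] [Module k W] [Module H W] [IsScalarTower k H W]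
    [SMulCommClass H k W] [FiniteDimensional k W], IsSimpleModule H W →
      IsSemisimpleModule H (ModuleTensor k W V H)

/-- An `H`-module is tensor-reducible if it is both left and right tensor-reducible. -/
def TensorReducible (V : Type u) [AddCommGroup V] [Module k V] [Module H V]
    [IsScalarTower k H V] [SMulCommClass H k V] : Prop :=
  LeftTensorReducible k H V ∧ RightTensorReducible k H V

end Reducible

/-!
A left tensor-reducible module `V` is semisimple, because `V ≅ V ⊗ k` for the trivial module `k`
(acted on through the counit), which is simple. Tensoring with `W` preserves injections and turns
a family of submodules spanning `V` into one spanning `V ⊗ W`; since submodules and sums of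
semisimple modules are semisimple, tensor-reducibility passes to the simple summands of `V`, and
back from them to `V`.
-/

instance {R S M : Type*} [Semiring R] [AddCommMonoid M]
    [Module R M] [SMul S R] [SMul S M] [IsScalarTower S R M] [SMulCommClass R S M]
    (p : Submodule R M) : SMulCommClass R S p :=
  ⟨fun r s x => Subtype.ext (smul_comm r s (x : M))⟩

section TensorFunctoriality

variable {k H V W V' W' : Type u} [CommSemiring k] [Semiring H] [Bialgebra k H]
  [AddCommMonoid V] [Module k V] [Module H V] [IsScalarTower k H V] [SMulCommClass H k V]
  [AddCommMonoid W] [Module k W] [Module H W] [IsScalarTower k H W] [SMulCommClass H k W]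
  [AddCommMonoid V'] [Module k V'] [Module H V'] [IsScalarTower k H V'] [SMulCommClass H k V']
  [AddCommMonoid W'] [Module k W'] [Module H W'] [IsScalarTower k H W'] [SMulCommClass H k W']

theorem tensorRep_tmul (h : H) (v : V) (w : W) :
    tensorRep k H V W h (v ⊗ₜ w) =
      TensorProduct.map (LinearMap.id.smulRight v) (LinearMap.id.smulRight w)
        (Coalgebra.comul h) := by
  change Module.endTensorEndAlgHom (Algebra.TensorProduct.map (Algebra.lsmul k k V)
    (Algebra.lsmul k k W) (Coalgebra.comul h)) (v ⊗ₜ w) = _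
  induction Coalgebra.comul (R := k) h with
  | zero => simp
  | add x y hx hy => simp only [map_add, LinearMap.add_apply, hx, hy]
  | tmul a b => simp [Module.endTensorEndAlgHom_apply]

noncomputable def ModuleTensor.map (f : V →ₗ[H] V') (g : W →ₗ[H] W') :
    ModuleTensor k V W H →ₗ[H] ModuleTensor k V' W' H where
  toFun := TensorProduct.map (f.restrictScalars k) (g.restrictScalars k)
  map_add' := map_add _
  map_smul' h x := by
    have hcomm : (TensorProduct.map (f.restrictScalars k) (g.restrictScalars k)).comp
        (tensorRep k H V W h) = (tensorRep k H V' W' h).comp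
          (TensorProduct.map (f.restrictScalars k) (g.restrictScalars k)) := by
      refine TensorProduct.ext' fun v w => ?_
      simp only [LinearMap.comp_apply, TensorProduct.map_tmul, tensorRep_tmul,
        TensorProduct.map_map]
      congr 2 <;> ext <;> simp
    exact LinearMap.congr_fun hcomm x

end TensorFunctoriality

namespace ModuleTensor

variable {k H V W V' W' : Type u} [Field k] [Ring H] [Bialgebra k H]
  [AddCommGroup V] [Module k V] [Module H V] [IsScalarTower k H V] [SMulCommClass H k V]
  [AddCommGroup W] [Module k W] [Module H W] [IsScalarTower k H W] [SMulCommClass H k W]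
  [AddCommGroup V'] [Module k V'] [Module H V'] [IsScalarTower k H V'] [SMulCommClass H k V']
  [AddCommGroup W'] [Module k W'] [Module H W'] [IsScalarTower k H W'] [SMulCommClass H k W']

theorem map_injective {f : V →ₗ[H] V'} {g : W →ₗ[H] W'} (hf : Function.Injective f)
    (hg : Function.Injective g) : Function.Injective (map (k := k) f g) :=
  TensorProduct.map_injective_of_flat_flat (f.restrictScalars k) (g.restrictScalars k) hf hg

theorem iSup_range_map_subtype_id {ι : Type*} {p : ι → Submodule H V} (hp : ⨆ i, p i = ⊤) :
    ⨆ i, LinearMap.range (map (k := k) (p i).subtype (LinearMap.id : W →ₗ[H] W)) = ⊤ := by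
  rw [← Submodule.restrictScalars_eq_top_iff k, Submodule.restrictScalars_iSup]
  have hk : ⨆ i, LinearMap.range (TensorProduct.map ((p i).subtype.restrictScalars k)
      ((LinearMap.id : W →ₗ[H] W).restrictScalars k)) = ⊤ := by
    simp_rw [TensorProduct.range_map, LinearMap.range_restrictScalars, Submodule.range_subtype,
      LinearMap.range_id, ← Submodule.map₂_iSup_left, ← Submodule.restrictScalars_iSup, hp]
    simp
  exact hk

theorem iSup_range_map_id_subtype {ι : Type*} {p : ι → Submodule H W} (hp : ⨆ i, p i = ⊤) :
    ⨆ i, LinearMap.range (map (k := k) (LinearMap.id : V →ₗ[H] V) (p i).subtype) = ⊤ := by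
  rw [← Submodule.restrictScalars_eq_top_iff k, Submodule.restrictScalars_iSup]
  have hk : ⨆ i, LinearMap.range (TensorProduct.map
      ((LinearMap.id : V →ₗ[H] V).restrictScalars k)
      ((p i).subtype.restrictScalars k)) = ⊤ := by
    simp_rw [TensorProduct.range_map, LinearMap.range_restrictScalars, Submodule.range_subtype,
      LinearMap.range_id, ← Submodule.map₂_iSup_right, ← Submodule.restrictScalars_iSup, hp]
    simp
  exact hk

end ModuleTensor

def TrivialModule (k _H : Type u) : Type u := k

namespace TrivialModule

variable {k H : Type u} [Field k] [Ring H] [Bialgebra k H]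

instance : AddCommGroup (TrivialModule k H) := inferInstanceAs (AddCommGroup k)

instance : Module k (TrivialModule k H) := inferInstanceAs (Module k k)

noncomputable instance : Module H (TrivialModule k H) :=
  Module.compHom k (Bialgebra.counitAlgHom k H).toRingHom

theorem smul_def (h : H) (c : TrivialModule k H) :
    h • c = Coalgebra.counit (R := k) h • c := rfl

instance : IsScalarTower k H (TrivialModule k H) :=
  ⟨fun c h x => by rw [smul_def, smul_def, map_smul, smul_eq_mul, mul_smul]⟩

instance : SMulCommClass H k (TrivialModule k H) :=
  ⟨fun h c x => by rw [smul_def, smul_def, smul_comm]⟩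

instance : FiniteDimensional k (TrivialModule k H) := inferInstanceAs (FiniteDimensional k k)

instance : IsSimpleModule H (TrivialModule k H) := by
  have : RingHomSurjective (Bialgebra.counitAlgHom k H).toRingHom :=
    ⟨fun c => ⟨algebraMap k H c, Bialgebra.counit_algebraMap c⟩⟩
  let toField : TrivialModule k H →ₛₗ[(Bialgebra.counitAlgHom k H).toRingHom] k :=
    { toFun := id, map_add' _ _ := rfl, map_smul' _ _ := rfl }
  exact (toField.isSimpleModule_iff_of_bijective Function.bijective_id).2 inferInstance

def equivField : TrivialModule k H ≃ₗ[k] k := LinearEquiv.refl k k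

end TrivialModule

noncomputable def ModuleTensor.rid (k H V : Type u) [Field k] [Ring H] [Bialgebra k H]
    [AddCommGroup V] [Module k V] [Module H V] [IsScalarTower k H V] [SMulCommClass H k V] :
    ModuleTensor k V (TrivialModule k H) H ≃ₗ[H] V where
  __ := TrivialModule.equivField.lTensor V ≪≫ₗ TensorProduct.rid k V
  map_smul' h x := by
    set rid : V ⊗[k] TrivialModule k H ≃ₗ[k] V :=
      TrivialModule.equivField.lTensor V ≪≫ₗ TensorProduct.rid k V
    -- the counit axiom `(id ⊗ ε) (Δ h) = h ⊗ 1` is what makes `rid` commute with `h`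
    have hcounit (v : V) (c : TrivialModule k H) :
        rid.toLinearMap ∘ₗ TensorProduct.map ((LinearMap.id : H →ₗ[k] H).smulRight v)
            ((LinearMap.id : H →ₗ[k] H).smulRight c) =
          (LinearMap.id : H →ₗ[k] H).smulRight (TrivialModule.equivField c • v) ∘ₗ
            (TensorProduct.rid k H).toLinearMap ∘ₗ
              (Coalgebra.counit (R := k) (A := H)).lTensor H := by
      refine TensorProduct.ext' fun a b => ?_
      simp [rid, TrivialModule.smul_def, smul_comm a]
    have hcomm : rid.toLinearMap ∘ₗ tensorRep k H V (TrivialModule k H) h =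
        DistribSMul.toLinearMap k V h ∘ₗ rid.toLinearMap := by
      refine TensorProduct.ext' fun v c => ?_
      simpa [tensorRep_tmul, rid, smul_comm h] using
        LinearMap.congr_fun (hcounit v c) (Coalgebra.comul h)
    exact LinearMap.congr_fun hcomm x

section Reducibility

variable {k H V V' : Type u} [Field k] [Ring H] [HopfAlgebra k H]
  [AddCommGroup V] [Module k V] [Module H V] [IsScalarTower k H V] [SMulCommClass H k V]
  [AddCommGroup V'] [Module k V'] [Module H V'] [IsScalarTower k H V'] [SMulCommClass H k V']

theorem LeftTensorReducible.isSemisimpleModule (hV : LeftTensorReducible k H V) :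
    IsSemisimpleModule H V :=
  have := hV (TrivialModule k H) inferInstance
  .congr (ModuleTensor.rid k H V).symm

theorem LeftTensorReducible.of_injective {f : V' →ₗ[H] V} (hf : Function.Injective f)
    (hV : LeftTensorReducible k H V) : LeftTensorReducible k H V' := fun W _ _ _ _ _ _ hW =>
  have := hV W hW
  .of_injective (ModuleTensor.map f LinearMap.id)
    (ModuleTensor.map_injective hf Function.injective_id)

theorem RightTensorReducible.of_injective {f : V' →ₗ[H] V} (hf : Function.Injective f)
    (hV : RightTensorReducible k H V) : RightTensorReducible k H V' := fun W _ _ _ _ _ _ hW =>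
  have := hV W hW
  .of_injective (ModuleTensor.map LinearMap.id f)
    (ModuleTensor.map_injective Function.injective_id hf)

theorem TensorReducible.of_injective {f : V' →ₗ[H] V} (hf : Function.Injective f)
    (hV : TensorReducible k H V) : TensorReducible k H V' :=
  ⟨hV.1.of_injective hf, hV.2.of_injective hf⟩

theorem LeftTensorReducible.of_iSup_eq_top {ι : Type*} {p : ι → Submodule H V}
    (hp : ∀ i, LeftTensorReducible k H (p i)) (htop : ⨆ i, p i = ⊤) :
    LeftTensorReducible k H V := fun W _ _ _ _ _ _ hW =>
  isSemisimpleModule_of_isSemisimpleModule_submodule'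
    (fun i => have := hp i W hW
      .range (ModuleTensor.map (k := k) (p i).subtype (LinearMap.id : W →ₗ[H] W)))
    (ModuleTensor.iSup_range_map_subtype_id htop)

theorem RightTensorReducible.of_iSup_eq_top {ι : Type*} {p : ι → Submodule H V}
    (hp : ∀ i, RightTensorReducible k H (p i)) (htop : ⨆ i, p i = ⊤) :
    RightTensorReducible k H V := fun W _ _ _ _ _ _ hW =>
  isSemisimpleModule_of_isSemisimpleModule_submodule'
    (fun i => have := hp i W hW
      .range (ModuleTensor.map (k := k) (LinearMap.id : W →ₗ[H] W) (p i).subtype))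
    (ModuleTensor.iSup_range_map_id_subtype htop)

theorem TensorReducible.of_iSup_eq_top {ι : Type*} {p : ι → Submodule H V}
    (hp : ∀ i, TensorReducible k H (p i)) (htop : ⨆ i, p i = ⊤) : TensorReducible k H V :=
  ⟨.of_iSup_eq_top (fun i => (hp i).1) htop, .of_iSup_eq_top (fun i => (hp i).2) htop⟩

end Reducibility

theorem tensorReducible_iff_directSum_of_tensorReducible_simples_general
    {k H : Type u} [Field k] [Ring H] [HopfAlgebra k H]
    (V : Type u) [AddCommGroup V] [Module k V] [Module H V] [IsScalarTower k H V]
    [SMulCommClass H k V] :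
    TensorReducible k H V ↔
      ∃ S : Set (Submodule H V), sSupIndep S ∧ sSup S = ⊤ ∧
        ∀ p ∈ S, IsSimpleModule H ↥p ∧
          (haveI : SMulCommClass H k ↥p :=
            ⟨fun h c x => Subtype.ext (smul_comm h c (x : V))⟩
           TensorReducible k H ↥p) := by
  constructor
  · intro hV
    have := hV.1.isSemisimpleModule
    obtain ⟨S, hindep, htop, hsimple⟩ :=
      IsSemisimpleModule.exists_sSupIndep_sSup_simples_eq_top H V
    exact ⟨S, hindep, htop, fun p hp => ⟨hsimple p hp, hV.of_injective p.injective_subtype⟩⟩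
  · rintro ⟨S, -, htop, hS⟩
    exact TensorReducible.of_iSup_eq_top (p := fun p : S => (p : Submodule H V))
      (fun p => (hS p p.2).2) (by rwa [← sSup_eq_iSup'])

/-- Over a Hopf algebra with bijective antipode all of whose irreducible modules are
finite-dimensional, a finite-dimensional `H`-module is tensor-reducible if and only if
it is a direct sum of tensor-reducible irreducible `H`-modules. -/
theorem tensorReducible_iff_directSum_of_tensorReducible_simples
    {k H : Type u} [Field k] [Ring H] [HopfAlgebra k H]
    (hS : Function.Bijective (HopfAlgebra.antipode (R := k) (A := H)))
    (hirr : ∀ (W : Type u) [AddCommGroup W] [Module k W] [Module H W]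
      [IsScalarTower k H W] [SMulCommClass H k W],
      IsSimpleModule H W → FiniteDimensional k W)
    (V : Type u) [AddCommGroup V] [Module k V] [Module H V] [IsScalarTower k H V]
    [SMulCommClass H k V] [FiniteDimensional k V] :
    TensorReducible k H V ↔
      ∃ S : Set (Submodule H V), sSupIndep S ∧ sSup S = ⊤ ∧
        ∀ p ∈ S, IsSimpleModule H ↥p ∧
          (haveI : SMulCommClass H k ↥p :=
            ⟨fun h c x => Subtype.ext (smul_comm h c (x : V))⟩
           TensorReducible k H ↥p) :=
  tensorReducible_iff_directSum_of_tensorReducible_simples_general V
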